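/- arXiv:2409.11304 — 4 statements merged into one kernel-verified Lean document; each statement's English description precedes it below -/
import Mathlib

section
/- Let V be a finite set of points in ℤ³ contained in {(i,j,k) : j < i}. Let φᵢ(V), φⱼ(V), φₖ(V) be the projections of V in the i-, j-, and k-directions respectively (e.g., φᵢ(V) = {(j,k) : ∃ i, (i,j,k) ∈ V}). Then 2·|V| ≤ |φᵢ(V) ∪ φⱼ(V)| · (2·|φₖ(V)|)^(1/2). -/
/-!
The discrete Loomis–Whitney inequality `|S|² ≤ |π_yz S| |π_xz S| |π_xy S|` follows from
Cauchy–Schwarz over the vertical fibres of `S` and the fact that a pair of points on a common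
vertical line is determined by the yz-shadow of one and the xz-shadow of the other.
Apply it to `W = V ∪ σ V`, where `σ` swaps the first two coordinates. Since `V` lies strictly
below the diagonal `i = j`, the union is disjoint, so `|W| = 2|V|` and `|π_xy W| = 2|π_xy V|`,
while both `π_yz W` and `π_xz W` equal `φᵢ(V) ∪ φⱼ(V)`.
-/

open Finset

namespace Finset

variable {ι κ : Type*} [DecidableEq κ]

theorem sum_card_fiber_sq_eq_card_filter_product (s : Finset ι) (f : ι → κ) :
    ∑ q ∈ s.image f, #{p ∈ s | f p = q} ^ 2 = #{pq ∈ s ×ˢ s | f pq.1 = f pq.2} := by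
  rw [card_eq_sum_card_fiberwise (f := fun pq => f pq.1) (t := s.image f)]
  · refine sum_congr rfl fun q _ => ?_
    rw [sq, ← card_product]
    congr 1
    ext ⟨p, p'⟩
    simp only [mem_filter, mem_product]
    grind
  · intro pq hpq
    simp only [coe_filter, mem_product, Set.mem_ofPred_eq] at hpq
    exact mem_image_of_mem f hpq.1.1

theorem card_union_image_eq_two_mul [DecidableEq ι] {s : Finset ι} {f : ι → ι}
    (hf : Function.Injective f) (hs : Disjoint s (s.image f)) : #(s ∪ s.image f) = 2 * #s := by
  rw [card_union_of_disjoint hs, card_image_of_injective s hf, two_mul]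

variable {α β γ : Type*} [DecidableEq α] [DecidableEq β] [DecidableEq γ]

theorem card_sq_le_card_image_mul_card_image_mul_card_image (S : Finset (α × β × γ)) :
    #S ^ 2 ≤ #(S.image fun p => (p.2.1, p.2.2)) * #(S.image fun p => (p.1, p.2.2)) *
      #(S.image fun p => (p.1, p.2.1)) := by
  set xy : α × β × γ → α × β := fun p => (p.1, p.2.1)
  set Pyz := S.image fun p => (p.2.1, p.2.2)
  set Pxz := S.image fun p => (p.1, p.2.2)
  have hpairs : #{pq ∈ S ×ˢ S | xy pq.1 = xy pq.2} ≤ #(Pyz ×ˢ Pxz) := by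
    refine card_le_card_of_injOn (fun pq => ((pq.1.2.1, pq.1.2.2), (pq.2.1, pq.2.2.2))) ?_ ?_
    · intro pq hpq
      simp only [coe_filter, mem_product, Set.mem_ofPred_eq] at hpq
      exact mem_product.2 ⟨mem_image_of_mem _ hpq.1.1, mem_image_of_mem _ hpq.1.2⟩
    · rintro ⟨⟨a, b, c⟩, ⟨a', b', c'⟩⟩ h ⟨⟨d, e, g⟩, ⟨d', e', g'⟩⟩ h' heq
      simp only [coe_filter, mem_product, Set.mem_ofPred_eq, xy, Prod.mk.injEq] at h h' heq
      grind
  calc #S ^ 2 = (∑ q ∈ S.image xy, #{p ∈ S | xy p = q}) ^ 2 := by rw [← card_eq_sum_card_image]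
    _ ≤ #(S.image xy) * ∑ q ∈ S.image xy, #{p ∈ S | xy p = q} ^ 2 := sq_sum_le_card_mul_sum_sq
    _ = #(S.image xy) * #{pq ∈ S ×ˢ S | xy pq.1 = xy pq.2} := by
      rw [sum_card_fiber_sq_eq_card_filter_product]
    _ ≤ #(S.image xy) * (#Pyz * #Pxz) :=
      Nat.mul_le_mul_left _ (hpairs.trans_eq (card_product _ _))
    _ = #Pyz * #Pxz * #(S.image xy) := mul_comm _ _

end Finset

section Symmetrization

variable {α γ : Type*}

def swapFirstTwo (p : α × α × γ) : α × α × γ := (p.2.1, p.1, p.2.2)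

theorem swapFirstTwo_injective : Function.Injective (swapFirstTwo : α × α × γ → _) := by
  rintro ⟨a, b, c⟩ ⟨d, e, f⟩ h
  simp_all [swapFirstTwo]

variable [DecidableEq α] [DecidableEq γ]

def symmetrize (V : Finset (α × α × γ)) : Finset (α × α × γ) := V ∪ V.image swapFirstTwo

theorem image_yz_symmetrize (V : Finset (α × α × γ)) :
    (symmetrize V).image (fun p => (p.2.1, p.2.2)) =
      V.image (fun p => (p.2.1, p.2.2)) ∪ V.image (fun p => (p.1, p.2.2)) := by
  rw [symmetrize, image_union, image_image]
  rfl

theorem image_xz_symmetrize (V : Finset (α × α × γ)) :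
    (symmetrize V).image (fun p => (p.1, p.2.2)) =
      V.image (fun p => (p.2.1, p.2.2)) ∪ V.image (fun p => (p.1, p.2.2)) := by
  rw [symmetrize, image_union, image_image, union_comm]
  rfl

theorem image_xy_symmetrize (V : Finset (α × α × γ)) :
    (symmetrize V).image (fun p => (p.1, p.2.1)) =
      V.image (fun p => (p.1, p.2.1)) ∪ (V.image fun p => (p.1, p.2.1)).image Prod.swap := by
  rw [symmetrize, image_union, image_image, image_image]
  rfl

variable [Preorder α]

theorem card_symmetrize {V : Finset (α × α × γ)} (hV : ∀ p ∈ V, p.2.1 < p.1) :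
    #(symmetrize V) = 2 * #V := by
  refine card_union_image_eq_two_mul swapFirstTwo_injective (disjoint_left.2 ?_)
  rintro p hp hp'
  obtain ⟨q, hq, rfl⟩ := mem_image.1 hp'
  exact lt_asymm (hV q hq) (hV _ hp)

theorem card_image_xy_symmetrize {V : Finset (α × α × γ)} (hV : ∀ p ∈ V, p.2.1 < p.1) :
    #((symmetrize V).image fun p => (p.1, p.2.1)) = 2 * #(V.image fun p => (p.1, p.2.1)) := by
  rw [image_xy_symmetrize]
  refine card_union_image_eq_two_mul Prod.swap_injective (disjoint_left.2 ?_)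
  simp only [mem_image]
  rintro _ ⟨p, hp, rfl⟩ ⟨_, ⟨q, hq, rfl⟩, hqp⟩
  obtain ⟨h₁, h₂⟩ := Prod.mk.inj hqp
  exact lt_asymm (hV p hp) (h₂ ▸ h₁ ▸ hV q hq)

end Symmetrization

theorem stmt_3 (V : Finset (ℤ × ℤ × ℤ)) (hV : ∀ p ∈ V, p.2.1 < p.1) :
    2 * (V.card : ℝ) ≤
      ((V.image (fun p => (p.2.1, p.2.2)) ∪ V.image (fun p => (p.1, p.2.2))).card : ℝ) *
        Real.sqrt (2 * ((V.image (fun p => (p.1, p.2.1))).card : ℝ)) := by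
  set a := (V.image (fun p => (p.2.1, p.2.2)) ∪ V.image (fun p => (p.1, p.2.2))).card
  set b := (V.image (fun p => (p.1, p.2.1))).card
  have hLW := card_sq_le_card_image_mul_card_image_mul_card_image (symmetrize V)
  rw [card_symmetrize hV, image_yz_symmetrize, image_xz_symmetrize,
    card_image_xy_symmetrize hV] at hLW
  have hsq : (2 * (V.card : ℝ)) ^ 2 ≤ (a : ℝ) ^ 2 * (2 * b) := by
    rw [sq (a : ℝ)]; exact_mod_cast hLW
  calc 2 * (V.card : ℝ) ≤ Real.sqrt ((a : ℝ) ^ 2 * (2 * b)) := Real.le_sqrt_of_sq_le hsq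
    _ = a * Real.sqrt (2 * b) := by rw [Real.sqrt_mul (by positivity), Real.sqrt_sq a.cast_nonneg]
end

section
/- Consider minimizing f(x₁,x₂) = m·x₁ + x₂ subject to (n₁(n₁−1)n₂/(√2·P))² ≤ x₁²·x₂, 0 ≤ x₁, and n₁(n₁−1)/(2P) ≤ x₂ ≤ n₁(n₁−1)/2, where P ≥ 1 and n₁, n₂ are positive integers and m > 0. If n₁ ≤ m·n₂ and P ≤ m·n₂/√(n₁(n₁−1)), then the minimum value is m·n₂·√(n₁(n₁−1))/P + n₁(n₁−1)/2, attained at x₁ = n₂·√(n₁(n₁−1))/P and x₂ = n₁(n₁−1)/2. -/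
/-!
Writing `y = u²` and `Y = v²`, the constraint `a² Y ≤ x² y` says `x ≥ a v / u`, so the objective is
at least `m a v / u + u²`. Along `t ↦ k / t + t²` the derivative is `2 t - k / t²`, which is
non-positive as long as `2 t³ ≤ k`; the case hypothesis `P √(n₁(n₁-1)) ≤ m n₂` says exactly that the
upper bound `x₂ = n₁(n₁-1)/2` lies in this decreasing range, so the minimum is at that endpoint.
-/

theorem mul_add_sq_le_mul_add_sq {m a x u v : ℝ} (ha : 0 ≤ a) (hu : 0 < u)
    (huv : u ≤ v) (hv : 2 * v ^ 2 ≤ m * a) (h : a * v ≤ x * u) :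
    m * a + v ^ 2 ≤ m * x + u ^ 2 := by
  have hm : 0 ≤ m := by
    by_contra! hm
    nlinarith [mul_nonpos_of_nonpos_of_nonneg hm.le ha]
  have hdecr : u * (v + u) ≤ m * a := by nlinarith
  -- `u (v² - u²) ≤ m a (v - u)`: what `y` loses against `Y` is recovered by `x` against `a`
  refine le_of_mul_le_mul_left ?_ hu
  nlinarith [mul_le_mul_of_nonneg_right hdecr (sub_nonneg.2 huv), mul_le_mul_of_nonneg_left h hm]

theorem mul_add_le_mul_add_of_sq_mul_le {m a x y Y : ℝ} (ha : 0 ≤ a) (hx : 0 ≤ x) (hy : 0 < y)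
    (hyY : y ≤ Y) (hY : 2 * Y ≤ m * a) (h : a ^ 2 * Y ≤ x ^ 2 * y) :
    m * a + Y ≤ m * x + y := by
  have hY0 : 0 ≤ Y := hy.le.trans hyY
  have hsqrt : a * √Y ≤ x * √y := by
    rw [← pow_le_pow_iff_left₀ (by positivity) (by positivity) two_ne_zero, mul_pow, mul_pow,
      Real.sq_sqrt hY0, Real.sq_sqrt hy.le]
    exact h
  have key := mul_add_sq_le_mul_add_sq ha (Real.sqrt_pos.2 hy) (Real.sqrt_le_sqrt hyY)
    (by rwa [Real.sq_sqrt hY0]) hsqrt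
  rwa [Real.sq_sqrt hY0, Real.sq_sqrt hy.le] at key

theorem stmt_5_general (m P : ℝ) (n₁ n₂ : ℕ)
    (hP : 1 ≤ P)
    (hcase₂ : P ≤ m * n₂ / Real.sqrt ((n₁ : ℝ) * (n₁ - 1))) :
    (∀ x₁ x₂ : ℝ,
      ((n₁ : ℝ) * (n₁ - 1) * n₂ / (Real.sqrt 2 * P)) ^ 2 ≤ x₁ ^ 2 * x₂ →
      0 ≤ x₁ →
      (n₁ : ℝ) * (n₁ - 1) / (2 * P) ≤ x₂ →
      x₂ ≤ (n₁ : ℝ) * (n₁ - 1) / 2 →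
      m * n₂ * Real.sqrt ((n₁ : ℝ) * (n₁ - 1)) / P + (n₁ : ℝ) * (n₁ - 1) / 2 ≤
        m * x₁ + x₂) ∧
    (((n₁ : ℝ) * (n₁ - 1) * n₂ / (Real.sqrt 2 * P)) ^ 2 ≤
        ((n₂ : ℝ) * Real.sqrt ((n₁ : ℝ) * (n₁ - 1)) / P) ^ 2 * ((n₁ : ℝ) * (n₁ - 1) / 2) ∧
      0 ≤ (n₂ : ℝ) * Real.sqrt ((n₁ : ℝ) * (n₁ - 1)) / P ∧
      (n₁ : ℝ) * (n₁ - 1) / (2 * P) ≤ (n₁ : ℝ) * (n₁ - 1) / 2 ∧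
      m * ((n₂ : ℝ) * Real.sqrt ((n₁ : ℝ) * (n₁ - 1)) / P) + (n₁ : ℝ) * (n₁ - 1) / 2 =
        m * n₂ * Real.sqrt ((n₁ : ℝ) * (n₁ - 1)) / P + (n₁ : ℝ) * (n₁ - 1) / 2) := by
  set s : ℝ := (n₁ : ℝ) * (n₁ - 1)
  have hP0 : 0 < P := one_pos.trans_le hP
  -- `m n₂ / √s` would be the junk value `0` if `s ≤ 0`
  have hsqrt : 0 < √s := by
    by_contra! h
    rw [le_antisymm h (Real.sqrt_nonneg s), div_zero] at hcase₂
    linarith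
  have hs : 0 < s := Real.sqrt_pos.1 hsqrt
  have hcase : P * √s ≤ m * n₂ := (le_div_iff₀ hsqrt).1 hcase₂
  have hfeas : (s * n₂ / (√2 * P)) ^ 2 = (n₂ * √s / P) ^ 2 * (s / 2) := by
    rw [div_pow, div_pow, mul_pow √2, mul_pow (n₂ : ℝ), Real.sq_sqrt zero_le_two, Real.sq_sqrt hs.le]
    field_simp
  have hdecr : 2 * (s / 2) ≤ m * (n₂ * √s / P) := by
    rw [mul_div_cancel₀ s two_ne_zero, ← mul_div_assoc, le_div_iff₀ hP0]
    nlinarith [Real.mul_self_sqrt hs.le]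
  refine ⟨fun x₁ x₂ hc hx₁ hlo hhi => ?_, hfeas.le, by positivity,
    div_le_div_of_nonneg_left hs.le two_pos (by linarith), by ring⟩
  have hx₂ : 0 < x₂ := (div_pos hs (by positivity)).trans_le hlo
  have := mul_add_le_mul_add_of_sq_mul_le (by positivity) hx₁ hx₂ hhi hdecr (hfeas ▸ hc)
  rwa [← mul_div_assoc, ← mul_assoc] at this

theorem stmt_5 (m P : ℝ) (n₁ n₂ : ℕ) (hm : 0 < m) (hn₁ : 0 < n₁) (hn₂ : 0 < n₂)
    (hP : 1 ≤ P)
    (hcase₁ : (n₁ : ℝ) ≤ m * n₂)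
    (hcase₂ : P ≤ m * n₂ / Real.sqrt ((n₁ : ℝ) * (n₁ - 1))) :
    (∀ x₁ x₂ : ℝ,
      ((n₁ : ℝ) * (n₁ - 1) * n₂ / (Real.sqrt 2 * P)) ^ 2 ≤ x₁ ^ 2 * x₂ →
      0 ≤ x₁ →
      (n₁ : ℝ) * (n₁ - 1) / (2 * P) ≤ x₂ →
      x₂ ≤ (n₁ : ℝ) * (n₁ - 1) / 2 →
      m * n₂ * Real.sqrt ((n₁ : ℝ) * (n₁ - 1)) / P + (n₁ : ℝ) * (n₁ - 1) / 2 ≤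
        m * x₁ + x₂) ∧
    (((n₁ : ℝ) * (n₁ - 1) * n₂ / (Real.sqrt 2 * P)) ^ 2 ≤
        ((n₂ : ℝ) * Real.sqrt ((n₁ : ℝ) * (n₁ - 1)) / P) ^ 2 * ((n₁ : ℝ) * (n₁ - 1) / 2) ∧
      0 ≤ (n₂ : ℝ) * Real.sqrt ((n₁ : ℝ) * (n₁ - 1)) / P ∧
      (n₁ : ℝ) * (n₁ - 1) / (2 * P) ≤ (n₁ : ℝ) * (n₁ - 1) / 2 ∧
      m * ((n₂ : ℝ) * Real.sqrt ((n₁ : ℝ) * (n₁ - 1)) / P) + (n₁ : ℝ) * (n₁ - 1) / 2 =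
        m * n₂ * Real.sqrt ((n₁ : ℝ) * (n₁ - 1)) / P + (n₁ : ℝ) * (n₁ - 1) / 2) :=
  stmt_5_general m P n₁ n₂ hP hcase₂
end

section
/- Consider minimizing f(x₁,x₂) = m·x₁ + x₂ subject to (n₁(n₁−1)n₂/(√2·P))² ≤ x₁²·x₂, 0 ≤ x₁, and n₁(n₁−1)/(2P) ≤ x₂ ≤ n₁(n₁−1)/2. If m·n₂ < n₁ and P ≤ n₁(n₁−1)/(m²n₂²), then the minimum value is m·n₂·√(n₁(n₁−1)/P) + n₁(n₁−1)/(2P), attained at x₁ = n₂·√(n₁(n₁−1)/P) and x₂ = n₁(n₁−1)/(2P). -/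
set_option maxHeartbeats 800000


theorem stmt_6 (m P : ℝ) (n₁ n₂ : ℕ) (hm : 0 < m) (hn₁ : 0 < n₁) (hn₂ : 0 < n₂)
    (hP : 1 ≤ P)
    (hcase₁ : m * n₂ < (n₁ : ℝ))
    (hcase₂ : P ≤ (n₁ : ℝ) * (n₁ - 1) / (m ^ 2 * n₂ ^ 2)) :
    (∀ x₁ x₂ : ℝ,
      ((n₁ : ℝ) * (n₁ - 1) * n₂ / (Real.sqrt 2 * P)) ^ 2 ≤ x₁ ^ 2 * x₂ →
      0 ≤ x₁ →
      (n₁ : ℝ) * (n₁ - 1) / (2 * P) ≤ x₂ →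
      x₂ ≤ (n₁ : ℝ) * (n₁ - 1) / 2 →
      m * n₂ * Real.sqrt ((n₁ : ℝ) * (n₁ - 1) / P) + (n₁ : ℝ) * (n₁ - 1) / (2 * P) ≤
        m * x₁ + x₂) ∧
    (((n₁ : ℝ) * (n₁ - 1) * n₂ / (Real.sqrt 2 * P)) ^ 2 ≤
        ((n₂ : ℝ) * Real.sqrt ((n₁ : ℝ) * (n₁ - 1) / P)) ^ 2 *
          ((n₁ : ℝ) * (n₁ - 1) / (2 * P)) ∧
      0 ≤ (n₂ : ℝ) * Real.sqrt ((n₁ : ℝ) * (n₁ - 1) / P) ∧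
      (n₁ : ℝ) * (n₁ - 1) / (2 * P) ≤ (n₁ : ℝ) * (n₁ - 1) / 2 ∧
      m * ((n₂ : ℝ) * Real.sqrt ((n₁ : ℝ) * (n₁ - 1) / P)) + (n₁ : ℝ) * (n₁ - 1) / (2 * P) =
        m * n₂ * Real.sqrt ((n₁ : ℝ) * (n₁ - 1) / P) + (n₁ : ℝ) * (n₁ - 1) / (2 * P)) := by
  have hP0 : (0:ℝ) < P := lt_of_lt_of_le one_pos hP
  have hmn2 : (0:ℝ) < m * n₂ := by positivity
  set A : ℝ := (n₁ : ℝ) * ((n₁ : ℝ) - 1) with hA_def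
  -- A > 0
  have hA : 0 < A := by
    rcases Nat.lt_or_ge n₁ 2 with h | h
    · interval_cases n₁
      · exfalso
        simp only [hA_def, Nat.cast_one] at hcase₂
        norm_num at hcase₂
        linarith
    · have : (2:ℝ) ≤ (n₁:ℝ) := by exact_mod_cast h
      have : (1:ℝ) ≤ (n₁:ℝ) - 1 := by linarith
      nlinarith
  set s : ℝ := Real.sqrt (A / P) with hs_def
  set r : ℝ := Real.sqrt (A / (2 * P)) with hr_def
  have hs2 : s ^ 2 = A / P := Real.sq_sqrt (by positivity)
  have hr2 : r ^ 2 = A / (2 * P) := Real.sq_sqrt (by positivity)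
  have hs_pos : 0 < s := Real.sqrt_pos.mpr (by positivity)
  have hr_pos : 0 < r := Real.sqrt_pos.mpr (by positivity)
  have h2 : (Real.sqrt 2) ^ 2 = 2 := Real.sq_sqrt (by norm_num)
  have h2pos : (0:ℝ) < Real.sqrt 2 := Real.sqrt_pos.mpr (by norm_num)
  -- m * n₂ ≤ s
  have hmns : m * n₂ ≤ s := by
    have hsq : (m * n₂) ^ 2 ≤ A / P := by
      have h1 : m ^ 2 * n₂ ^ 2 * P ≤ A := by
        have h := (le_div_iff₀ (by positivity : (0:ℝ) < m ^ 2 * n₂ ^ 2)).mp hcase₂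
        nlinarith
      rw [le_div_iff₀ hP0]
      nlinarith
    nlinarith [hs2, hs_pos, hmn2]
  -- K = n₂ * s * r
  set K : ℝ := A * n₂ / (Real.sqrt 2 * P) with hK_def
  have hK_nonneg : 0 ≤ K := by positivity
  have hKsq : K ^ 2 = ((n₂ : ℝ) * s * r) ^ 2 := by
    have hL : K ^ 2 = A ^ 2 * n₂ ^ 2 / (2 * P ^ 2) := by
      have h2P : (Real.sqrt 2 * P) ^ 2 = 2 * P ^ 2 := by rw [mul_pow, h2]
      rw [hK_def, div_pow, h2P, mul_pow]
    rw [hL]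
    have hR : ((n₂:ℝ) * s * r) ^ 2 = (n₂:ℝ)^2 * s^2 * r^2 := by ring
    rw [hR, hs2, hr2]
    field_simp
  have hK : K = (n₂ : ℝ) * s * r := by
    have hnsr : 0 ≤ (n₂ : ℝ) * s * r := by positivity
    calc K = Real.sqrt (K ^ 2) := (Real.sqrt_sq hK_nonneg).symm
    _ = Real.sqrt (((n₂ : ℝ) * s * r) ^ 2) := by rw [hKsq]
    _ = (n₂ : ℝ) * s * r := Real.sqrt_sq hnsr
  constructor
  · intro x₁ x₂ hcon hx₁ hx₂l hx₂u
    have hc_pos : 0 < A / (2 * P) := by positivity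
    have hx₂pos : 0 < x₂ := lt_of_lt_of_le hc_pos hx₂l
    set u : ℝ := Real.sqrt x₂ with hu_def
    have hu2 : u ^ 2 = x₂ := Real.sq_sqrt hx₂pos.le
    have hu_pos : 0 < u := Real.sqrt_pos.mpr hx₂pos
    have hur : r ≤ u := Real.sqrt_le_sqrt hx₂l
    -- x₁ * u ≥ K
    have hx₁u : K ≤ x₁ * u := by
      have hcon' : K ^ 2 ≤ (x₁ * u) ^ 2 := by
        have : (x₁ * u) ^ 2 = x₁ ^ 2 * x₂ := by rw [mul_pow, hu2]
        rw [this]; exact hcon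
      nlinarith [mul_nonneg hx₁ hu_pos.le, hK_nonneg]
    -- key factorization
    have hfac : 0 ≤ (u - r) * (u ^ 2 + r * u - m * (n₂:ℝ) * s) := by
      apply mul_nonneg (by linarith)
      have h2r2 : s ^ 2 = 2 * r ^ 2 := by rw [hs2, hr2]; field_simp
      nlinarith [hur, hr_pos, hmns, hs_pos]
    have hkey : 0 ≤ (m * x₁ + x₂ - (m * (n₂:ℝ) * s + r ^ 2)) * u := by
      have hx₁uK : m * K ≤ m * (x₁ * u) := by
        exact mul_le_mul_of_nonneg_left hx₁u hm.le
      nlinarith [hfac, hK, hu2]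
    have : m * (n₂:ℝ) * s + r ^ 2 ≤ m * x₁ + x₂ := by nlinarith [hkey, hu_pos]
    rw [hr2] at this
    exact this
  · refine ⟨?_, by positivity, ?_, by ring⟩
    · have h2P : (Real.sqrt 2 * P) ^ 2 = 2 * P ^ 2 := by rw [mul_pow, h2]
      have hL : (A * (n₂:ℝ) / (Real.sqrt 2 * P)) ^ 2 = A ^ 2 * n₂ ^ 2 / (2 * P ^ 2) := by
        rw [div_pow, h2P, mul_pow]
      have hR : ((n₂:ℝ) * s) ^ 2 * (A / (2 * P)) = (n₂:ℝ)^2 * (A/P) * (A / (2*P)) := by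
        rw [mul_pow, hs2]
      rw [hL, hR]
      apply le_of_eq
      field_simp
    · exact div_le_div_of_nonneg_left hA.le (by norm_num) (by linarith)
end

section
/- Let F ⊆ {(i,j,k) ∈ ℤ³ : i > j} be finite, with projections φᵢ(F), φⱼ(F), φₖ(F). If m·|φᵢ(F) ∪ φⱼ(F)| + |φₖ(F)| ≤ X for positive reals m, X, then |F| ≤ (√2/(3√3·m))·X^(3/2). -/
lemma anal (m X a c : ℝ) (hm : 0 < m) (hX : 0 < X) (ha : 0 ≤ a) (hc : 0 ≤ c)
    (h : m * a + c ≤ X) :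
    a * Real.sqrt c / Real.sqrt 2 ≤ Real.sqrt 2 / (3 * Real.sqrt 3 * m) * X ^ ((3 : ℝ) / 2) := by
  have h2 : (0:ℝ) < Real.sqrt 2 := by positivity
  have h3 : (0:ℝ) < Real.sqrt 3 := by positivity
  have hR : 0 ≤ Real.sqrt 2 / (3 * Real.sqrt 3 * m) * X ^ ((3 : ℝ) / 2) := by positivity
  have hL : 0 ≤ a * Real.sqrt c / Real.sqrt 2 := by positivity
  have key : (a * Real.sqrt c / Real.sqrt 2) ^ 2 ≤
      (Real.sqrt 2 / (3 * Real.sqrt 3 * m) * X ^ ((3 : ℝ) / 2)) ^ 2 := by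
    have hXr : (X ^ ((3 : ℝ) / 2)) ^ 2 = X ^ 3 := by
      rw [← Real.rpow_natCast (X ^ ((3:ℝ)/2)) 2, ← Real.rpow_mul hX.le]
      rw [← Real.rpow_natCast X 3]
      norm_num
    have hs2 : Real.sqrt 2 ^ 2 = 2 := Real.sq_sqrt (by norm_num)
    have hsc : Real.sqrt c ^ 2 = c := Real.sq_sqrt hc
    have hs3 : Real.sqrt 3 ^ 2 = 3 := Real.sq_sqrt (by norm_num)
    have hcube : (m * a + c) ^ 3 ≤ X ^ 3 := by
      apply pow_le_pow_left₀ (by positivity) h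
    have hma : 0 ≤ m * a := by positivity
    have hprod : 0 ≤ (m * a - 2 * c)^2 * (4 * (m*a) + c) :=
      mul_nonneg (sq_nonneg _) (by positivity)
    have hineq : 27 * (m*a)^2 * c ≤ 4 * X ^ 3 := by nlinarith
    have hm2 : (0:ℝ) < m ^ 2 := by positivity
    rw [div_pow, mul_pow, mul_pow, div_pow, mul_pow, mul_pow, hXr, hs2, hsc, hs3]
    rw [div_mul_eq_mul_div, div_le_div_iff₀ (by norm_num) (by positivity)]
    nlinarith [sq_nonneg m, mul_pos hm hm]
  calc a * Real.sqrt c / Real.sqrt 2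
      = Real.sqrt ((a * Real.sqrt c / Real.sqrt 2)^2) := (Real.sqrt_sq hL).symm
    _ ≤ Real.sqrt ((Real.sqrt 2 / (3 * Real.sqrt 3 * m) * X ^ ((3 : ℝ) / 2)) ^ 2) :=
        Real.sqrt_le_sqrt key
    _ = _ := Real.sqrt_sq hR

open Finset

lemma comb (F : Finset (ℤ × ℤ × ℤ)) (hF : ∀ p ∈ F, p.2.1 < p.1) :
    (F.card : ℝ) ≤ ((F.image (fun p => (p.2.1, p.2.2)) ∪ F.image (fun p => (p.1, p.2.2))).card : ℝ)
      * Real.sqrt ((F.image (fun p => (p.1, p.2.1))).card) / Real.sqrt 2 := by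
  classical
  set A := F.image (fun p => (p.2.1, p.2.2)) ∪ F.image (fun p => (p.1, p.2.2)) with hA
  set C := F.image (fun p => (p.1, p.2.1)) with hC
  set K := F.image (fun p => p.2.2) with hK
  set Fk : ℤ → Finset (ℤ × ℤ × ℤ) := fun k => F.filter (fun p => p.2.2 = k) with hFk
  set Sk : ℤ → Finset ℤ :=
    fun k => ((Fk k).image (fun p => p.2.1)) ∪ ((Fk k).image (fun p => p.1)) with hSk
  have hcard : F.card = ∑ k ∈ K, (Fk k).card :=
    card_eq_sum_card_fiberwise (fun p hp => mem_image_of_mem _ hp)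
  have hFC : ∀ k, (Fk k).card ≤ C.card := by
    intro k
    apply card_le_card_of_injOn (fun p => (p.1, p.2.1))
    · intro p hp; exact mem_image_of_mem _ (mem_filter.mp hp).1
    · intro p hp q hq hpq
      have hk1 := (mem_filter.mp hp).2
      have hk2 := (mem_filter.mp hq).2
      simp only [Prod.mk.injEq] at hpq
      exact Prod.ext hpq.1 (Prod.ext hpq.2 (hk1.trans hk2.symm))
  have hF2 : ∀ k, 2 * (Fk k).card ≤ (Sk k).card ^ 2 := by
    intro k
    set T := ((Sk k) ×ˢ (Sk k)).filter (fun q => q.2 < q.1) with hT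
    set T' := ((Sk k) ×ˢ (Sk k)).filter (fun q => q.1 < q.2) with hT'
    have hFT : (Fk k).card ≤ T.card := by
      apply card_le_card_of_injOn (fun p => (p.1, p.2.1))
      · intro p hp
        have hpF := (mem_filter.mp hp).1
        refine mem_filter.mpr ⟨mem_product.mpr ⟨?_, ?_⟩, hF p hpF⟩
        · exact mem_union_right _ (mem_image_of_mem _ hp)
        · exact mem_union_left _ (mem_image_of_mem _ hp)
      · intro p hp q hq hpq
        have hk1 := (mem_filter.mp hp).2
        have hk2 := (mem_filter.mp hq).2
        simp only [Prod.mk.injEq] at hpq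
        exact Prod.ext hpq.1 (Prod.ext hpq.2 (hk1.trans hk2.symm))
    have hTT' : T.card = T'.card := by
      apply card_bij (fun q _ => Prod.swap q)
      · intro q hq
        have h1 := mem_filter.mp hq
        have h2 := mem_product.mp h1.1
        exact mem_filter.mpr ⟨mem_product.mpr ⟨h2.2, h2.1⟩, h1.2⟩
      · intro q _ q' _ h
        exact Prod.swap_injective h
      · intro q hq
        have h1 := mem_filter.mp hq
        have h2 := mem_product.mp h1.1
        exact ⟨Prod.swap q, mem_filter.mpr ⟨mem_product.mpr ⟨h2.2, h2.1⟩, h1.2⟩, rfl⟩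
    have hdisj : Disjoint T T' := by
      rw [disjoint_left]
      intro q hq hq'
      exact absurd ((mem_filter.mp hq).2) (not_lt.mpr (le_of_lt (mem_filter.mp hq').2))
    have hsub : T.card + T'.card ≤ ((Sk k) ×ˢ (Sk k)).card := by
      rw [← card_union_of_disjoint hdisj]
      exact card_le_card (union_subset (filter_subset _ _) (filter_subset _ _))
    have hprod : ((Sk k) ×ˢ (Sk k)).card = (Sk k).card * (Sk k).card := card_product _ _
    nlinarith [hFT, hTT', hsub, hprod]
  have hSA : ∑ k ∈ K, (Sk k).card ≤ A.card := by
    have hAfib : A.card = ∑ k ∈ K, (A.filter (fun q => q.2 = k)).card := by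
      apply card_eq_sum_card_fiberwise
      intro q hq
      rcases mem_union.mp hq with h | h <;>
        · obtain ⟨p, hp, rfl⟩ := mem_image.mp h
          exact mem_image_of_mem _ hp
    rw [hAfib]
    apply sum_le_sum
    intro k _
    apply card_le_card_of_injOn (fun x => (x, k))
    · intro x hx
      refine mem_filter.mpr ⟨?_, rfl⟩
      rcases mem_union.mp hx with h | h
      · obtain ⟨p, hp, rfl⟩ := mem_image.mp h
        have hpF := (mem_filter.mp hp).1
        have hk := (mem_filter.mp hp).2
        exact mem_union_left _ (mem_image.mpr ⟨p, hpF, by rw [hk]⟩)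
      · obtain ⟨p, hp, rfl⟩ := mem_image.mp h
        have hpF := (mem_filter.mp hp).1
        have hk := (mem_filter.mp hp).2
        exact mem_union_right _ (mem_image.mpr ⟨p, hpF, by rw [hk]⟩)
    · intro x _ y _ h
      exact congrArg Prod.fst h
  -- real per-fiber bound
  have hfiber : ∀ k, ((Fk k).card : ℝ) ≤ ((Sk k).card : ℝ) * (Real.sqrt (C.card) / Real.sqrt 2) := by
    intro k
    have h1 : ((Fk k).card : ℝ) ^ 2 ≤ ((Sk k).card : ℝ) ^ 2 * (C.card : ℝ) / 2 := by
      have hn : 2 * ((Fk k).card * (Fk k).card) ≤ (Sk k).card ^ 2 * C.card := by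
        calc 2 * ((Fk k).card * (Fk k).card) = (2 * (Fk k).card) * (Fk k).card := by ring
          _ ≤ (Sk k).card ^ 2 * C.card := Nat.mul_le_mul (hF2 k) (hFC k)
      have := Nat.cast_le (α := ℝ).mpr hn
      push_cast at this
      nlinarith [this]
    calc ((Fk k).card : ℝ) = Real.sqrt (((Fk k).card : ℝ) ^ 2) :=
          (Real.sqrt_sq (by positivity)).symm
      _ ≤ Real.sqrt (((Sk k).card : ℝ) ^ 2 * (C.card : ℝ) / 2) := Real.sqrt_le_sqrt h1
      _ = ((Sk k).card : ℝ) * (Real.sqrt (C.card) / Real.sqrt 2) := by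
          rw [Real.sqrt_div (by positivity), Real.sqrt_mul (by positivity),
            Real.sqrt_sq (by positivity), mul_div_assoc]
  calc (F.card : ℝ) = ∑ k ∈ K, ((Fk k).card : ℝ) := by rw [hcard]; push_cast; ring
    _ ≤ ∑ k ∈ K, ((Sk k).card : ℝ) * (Real.sqrt (C.card) / Real.sqrt 2) :=
        sum_le_sum fun k _ => hfiber k
    _ = (∑ k ∈ K, ((Sk k).card : ℝ)) * (Real.sqrt (C.card) / Real.sqrt 2) := by
        rw [← sum_mul]
    _ ≤ (A.card : ℝ) * (Real.sqrt (C.card) / Real.sqrt 2) := by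
        apply mul_le_mul_of_nonneg_right _ (by positivity)
        have := Nat.cast_le (α := ℝ).mpr hSA
        push_cast at this ⊢
        exact this
    _ = (A.card : ℝ) * Real.sqrt (C.card) / Real.sqrt 2 := by ring

theorem stmt_8 (m X : ℝ) (hm : 0 < m) (hX : 0 < X)
    (F : Finset (ℤ × ℤ × ℤ)) (hF : ∀ p ∈ F, p.2.1 < p.1)
    (hdata : m * ((F.image (fun p => (p.2.1, p.2.2)) ∪
        F.image (fun p => (p.1, p.2.2))).card : ℝ) +
      ((F.image (fun p => (p.1, p.2.1))).card : ℝ) ≤ X) :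
    (F.card : ℝ) ≤ Real.sqrt 2 / (3 * Real.sqrt 3 * m) * X ^ ((3 : ℝ) / 2) := by
  calc (F.card : ℝ)
      ≤ ((F.image (fun p => (p.2.1, p.2.2)) ∪ F.image (fun p => (p.1, p.2.2))).card : ℝ)
        * Real.sqrt ((F.image (fun p => (p.1, p.2.1))).card) / Real.sqrt 2 := comb F hF
    _ ≤ Real.sqrt 2 / (3 * Real.sqrt 3 * m) * X ^ ((3 : ℝ) / 2) :=
        anal m X _ _ hm hX (by positivity) (by positivity) hdata
end
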